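/- Let μ ∈ (0,4) and θ > 3 − μ/4, and suppose F satisfies θF(z) ≤ z·∇F(z) and F > 0 away from 0. If (u,v) satisfies the Pohozaev constraint P(u,v) = 0 (as above), then J(u,v) ≥ ((4θ + μ − 12)/8) ∫_{ℝ⁴}(I_μ * F(u,v)) F(u,v) dx, and in particular J(u,v) ≥ 0 with the coefficient (4θ + μ − 12)/8 > 0. -/

import Mathlib

open MeasureTheory Filter

lemma F_zero_of_AR (θ : ℝ) (hθpos : 0 < θ) (F : ℝ × ℝ → ℝ) (hFc : Continuous F)
    (hFpos : ∀ z : ℝ × ℝ, z ≠ 0 → 0 < F z)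
    (hF1 : ContDiffOn ℝ 1 F {(0 : ℝ × ℝ)}ᶜ)
    (hAR : ∀ z : ℝ × ℝ, z ≠ 0 → θ * F z ≤ fderiv ℝ F z z) : F 0 = 0 := by
  set z0 : ℝ × ℝ := (1, 0) with hz0def
  have hz0 : z0 ≠ 0 := by simp [hz0def, Prod.ext_iff]
  have hsm : ∀ t : ℝ, t ≠ 0 → t • z0 ≠ 0 := fun t ht => smul_ne_zero ht hz0
  have hg : ∀ t : ℝ, t ≠ 0 → HasDerivAt (fun s : ℝ => F (s • z0))
      (fderiv ℝ F (t • z0) z0) t := by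
    intro t ht
    have hd : DifferentiableAt ℝ F (t • z0) :=
      (hF1.contDiffAt (isOpen_compl_singleton.mem_nhds (hsm t ht))).differentiableAt one_ne_zero
    have h1 : HasDerivAt (fun s : ℝ => s • z0) z0 t := by
      simpa using (hasDerivAt_id t).smul_const z0
    exact hd.hasFDerivAt.comp_hasDerivAt t h1
  -- key bound on the ray
  have key : ∀ a : ℝ, a ∈ Set.Ioc (0 : ℝ) 1 → F (a • z0) ≤ F z0 * a ^ θ := by
    rintro a ⟨ha0, ha1⟩
    set h : ℝ → ℝ := fun t => F (t • z0) * t ^ (-θ) with hdef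
    have hder : ∀ x : ℝ, 0 < x → HasDerivAt h
        (fderiv ℝ F (x • z0) z0 * x ^ (-θ) + F (x • z0) * (-θ * x ^ (-θ - 1))) x := by
      intro x hx
      exact (hg x hx.ne').mul (Real.hasDerivAt_rpow_const (Or.inl hx.ne'))
    have hmono : MonotoneOn h (Set.Icc a 1) := by
      apply monotoneOn_of_deriv_nonneg (convex_Icc a 1)
      · intro x hx
        have hx0 : 0 < x := lt_of_lt_of_le ha0 hx.1
        exact ((hder x hx0).continuousAt).continuousWithinAt
      · intro x hx
        rw [interior_Icc] at hx
        exact ((hder x (ha0.trans hx.1)).differentiableAt).differentiableWithinAt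
      · intro x hx
        rw [interior_Icc] at hx
        have hx0 : 0 < x := ha0.trans hx.1
        rw [(hder x hx0).deriv]
        have hAR' := hAR (x • z0) (hsm x hx0.ne')
        have hmap : fderiv ℝ F (x • z0) (x • z0) = x * fderiv ℝ F (x • z0) z0 := by
          rw [(fderiv ℝ F (x • z0)).map_smul]; simp [smul_eq_mul]
        rw [hmap] at hAR'
        have hxp : x ^ (-θ) = x ^ (-θ - 1) * x := by
          rw [← Real.rpow_add_one hx0.ne']; ring_nf
        have hnn : 0 ≤ x ^ (-θ - 1) := Real.rpow_nonneg hx0.le _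
        have : fderiv ℝ F (x • z0) z0 * x ^ (-θ) + F (x • z0) * (-θ * x ^ (-θ - 1))
            = (x * fderiv ℝ F (x • z0) z0 - θ * F (x • z0)) * x ^ (-θ - 1) := by
          rw [hxp]; ring
        rw [this]
        exact mul_nonneg (by linarith) hnn
    have h1le : h a ≤ h 1 := hmono ⟨le_refl a, ha1⟩ ⟨ha1, le_refl 1⟩ ha1
    have hh1 : h 1 = F z0 := by simp [hdef, Real.one_rpow]
    have hha : h a = F (a • z0) * a ^ (-θ) := rfl
    rw [hh1, hha] at h1le
    have hat : (0:ℝ) < a ^ θ := Real.rpow_pos_of_pos ha0 θ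
    have := mul_le_mul_of_nonneg_right h1le hat.le
    have hcancel : a ^ (-θ) * a ^ θ = 1 := by
      rw [← Real.rpow_add ha0]; simp
    calc F (a • z0) = F (a • z0) * (a ^ (-θ) * a ^ θ) := by rw [hcancel, mul_one]
      _ = F (a • z0) * a ^ (-θ) * a ^ θ := by ring
      _ ≤ F z0 * a ^ θ := this
  -- squeeze as a → 0+
  have h1 : Tendsto (fun a : ℝ => F (a • z0)) (nhdsWithin 0 (Set.Ioi 0)) (nhds (F 0)) := by
    have hc : Continuous fun a : ℝ => F (a • z0) := hFc.comp (by continuity)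
    have h' := (hc.tendsto 0).mono_left (nhdsWithin_le_nhds (s := Set.Ioi (0:ℝ)))
    simpa using h'
  have h2 : Tendsto (fun a : ℝ => F z0 * a ^ θ) (nhdsWithin 0 (Set.Ioi 0)) (nhds 0) := by
    have hc : ContinuousAt (fun a : ℝ => a ^ θ) 0 :=
      Real.continuousAt_rpow_const 0 θ (Or.inr hθpos.le)
    have h' := (hc.tendsto.mono_left (nhdsWithin_le_nhds (s := Set.Ioi (0:ℝ)))).const_mul (F z0)
    simpa [Real.zero_rpow hθpos.ne'] using h'
  have hev : ∀ᶠ a in nhdsWithin (0:ℝ) (Set.Ioi 0), F (a • z0) ≤ F z0 * a ^ θ := by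
    filter_upwards [Ioc_mem_nhdsGT_of_mem (Set.mem_Ico.mpr ⟨le_refl 0, one_pos⟩)] with a ha
    exact key a ha
  have hevpos : ∀ᶠ a in nhdsWithin (0:ℝ) (Set.Ioi 0), 0 ≤ F (a • z0) := by
    filter_upwards [self_mem_nhdsWithin] with a ha
    exact (hFpos _ (hsm a (ne_of_gt ha))).le
  have hle : F 0 ≤ 0 := le_of_tendsto_of_tendsto h1 h2 hev
  have hge : (0:ℝ) ≤ F 0 := ge_of_tendsto h1 hevpos
  linarith

noncomputable section

/-- The Laplacian of a function on `ℝ⁴`. -/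
def lap (u : EuclideanSpace ℝ (Fin 4) → ℝ) (x : EuclideanSpace ℝ (Fin 4)) : ℝ :=
  ∑ i : Fin 4, fderiv ℝ (fun y => fderiv ℝ u y (EuclideanSpace.single i 1)) x
    (EuclideanSpace.single i 1)

/-- Under the Ambrosetti–Rabinowitz condition with `θ > 3 − μ/4`, on the Pohozaev
constraint `P(u,v) = 0` the energy satisfies
`J(u,v) ≥ ((4θ + μ − 12)/8) ∫ (I_μ * F(u,v)) F(u,v)`, and in particular `J(u,v) ≥ 0`
with `(4θ + μ − 12)/8 > 0`. -/
theorem energy_lower_bound_on_pohozaev (μ θ : ℝ) (hμ : μ ∈ Set.Ioo (0 : ℝ) 4)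
    (hθ : 3 - μ / 4 < θ) (F : ℝ × ℝ → ℝ) (hFc : Continuous F)
    (hFpos : ∀ z : ℝ × ℝ, z ≠ 0 → 0 < F z)
    (hF1 : ContDiffOn ℝ 1 F {(0 : ℝ × ℝ)}ᶜ)
    (hAR : ∀ z : ℝ × ℝ, z ≠ 0 → θ * F z ≤ fderiv ℝ F z z)
    (u v : EuclideanSpace ℝ (Fin 4) → ℝ)
    (hK1 : Integrable (fun p : EuclideanSpace ℝ (Fin 4) × EuclideanSpace ℝ (Fin 4) =>
      F (u p.2, v p.2) * F (u p.1, v p.1) / dist p.1 p.2 ^ μ))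
    (hK2 : Integrable (fun p : EuclideanSpace ℝ (Fin 4) × EuclideanSpace ℝ (Fin 4) =>
      F (u p.2, v p.2) * fderiv ℝ F (u p.1, v p.1) (u p.1, v p.1) / dist p.1 p.2 ^ μ))
    (hP : (∫ x, ((lap u x) ^ 2 + (lap v x) ^ 2)) =
      ∫ x, ∫ y, F (u y, v y) *
        (fderiv ℝ F (u x, v x) (u x, v x) - (2 - μ / 4) * F (u x, v x)) / dist x y ^ μ) :
    0 < (4 * θ + μ - 12) / 8 ∧
    ((4 * θ + μ - 12) / 8) * (∫ x, ∫ y, F (u y, v y) * F (u x, v x) / dist x y ^ μ) ≤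
      (1 / 2) * (∫ x, ((lap u x) ^ 2 + (lap v x) ^ 2)) -
        (1 / 2) * (∫ x, ∫ y, F (u y, v y) * F (u x, v x) / dist x y ^ μ) ∧
    0 ≤ (1 / 2) * (∫ x, ((lap u x) ^ 2 + (lap v x) ^ 2)) -
        (1 / 2) * (∫ x, ∫ y, F (u y, v y) * F (u x, v x) / dist x y ^ μ) := by
  obtain ⟨hμ0, hμ4⟩ := hμ
  have hθpos : 0 < θ := by linarith
  have hF0 : F 0 = 0 := F_zero_of_AR θ hθpos F hFc hFpos hF1 hAR
  have hFnn : ∀ z : ℝ × ℝ, 0 ≤ F z := by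
    intro z
    rcases eq_or_ne z 0 with rfl | hz
    · exact hF0.ge
    · exact (hFpos z hz).le
  have hAR' : ∀ z : ℝ × ℝ, θ * F z ≤ fderiv ℝ F z z := by
    intro z
    rcases eq_or_ne z 0 with rfl | hz
    · simp [hF0]
    · exact hAR z hz
  set g1 : EuclideanSpace ℝ (Fin 4) × EuclideanSpace ℝ (Fin 4) → ℝ := fun p => F (u p.2, v p.2) * F (u p.1, v p.1) / dist p.1 p.2 ^ μ
    with hg1
  set g2 : EuclideanSpace ℝ (Fin 4) × EuclideanSpace ℝ (Fin 4) → ℝ := fun p =>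
    F (u p.2, v p.2) * fderiv ℝ F (u p.1, v p.1) (u p.1, v p.1) / dist p.1 p.2 ^ μ with hg2
  have hK1' : Integrable g1 ((volume : Measure (EuclideanSpace ℝ (Fin 4))).prod volume) := by
    rwa [← Measure.volume_eq_prod]
  have hK2' : Integrable g2 ((volume : Measure (EuclideanSpace ℝ (Fin 4))).prod volume) := by
    rwa [← Measure.volume_eq_prod]
  set B : ℝ := ∫ p, g1 p ∂((volume : Measure (EuclideanSpace ℝ (Fin 4))).prod volume) with hBdef
  set C : ℝ := ∫ p, g2 p ∂((volume : Measure (EuclideanSpace ℝ (Fin 4))).prod volume) with hCdef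
  set A : ℝ := ∫ x, ((lap u x) ^ 2 + (lap v x) ^ 2) with hAdef
  have hBeq : (∫ x, ∫ y, F (u y, v y) * F (u x, v x) / dist x y ^ μ) = B := by
    exact MeasureTheory.integral_integral hK1'
  have hCeq : (∫ x, ∫ y, F (u y, v y) * fderiv ℝ F (u x, v x) (u x, v x) / dist x y ^ μ) = C :=
    MeasureTheory.integral_integral hK2'
  have hPrw : (∫ x, ∫ y, F (u y, v y) *
      (fderiv ℝ F (u x, v x) (u x, v x) - (2 - μ / 4) * F (u x, v x)) / dist x y ^ μ)
      = C - (2 - μ / 4) * B := by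
    have hpt : ∀ x y : EuclideanSpace ℝ (Fin 4), F (u y, v y) *
        (fderiv ℝ F (u x, v x) (u x, v x) - (2 - μ / 4) * F (u x, v x)) / dist x y ^ μ
        = g2 (x, y) - (2 - μ / 4) * g1 (x, y) := by
      intro x y
      simp only [hg1, hg2]
      ring
    calc (∫ x, ∫ y, F (u y, v y) *
        (fderiv ℝ F (u x, v x) (u x, v x) - (2 - μ / 4) * F (u x, v x)) / dist x y ^ μ)
        = ∫ x, ∫ y, (g2 (x, y) - (2 - μ / 4) * g1 (x, y)) := by
          simp only [hpt]
      _ = ∫ p, (g2 p - (2 - μ / 4) * g1 p) ∂((volume : Measure (EuclideanSpace ℝ (Fin 4))).prod volume) :=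
          MeasureTheory.integral_integral (hK2'.sub (hK1'.const_mul _))
      _ = C - (2 - μ / 4) * B := by
          rw [integral_sub hK2' (hK1'.const_mul _), integral_const_mul]
  have hA : A = C - (2 - μ / 4) * B := hP.trans hPrw
  have hBnn : 0 ≤ B := by
    apply integral_nonneg
    intro p
    exact div_nonneg (mul_nonneg (hFnn _) (hFnn _)) (Real.rpow_nonneg dist_nonneg μ)
  have hθB : θ * B ≤ C := by
    rw [hBdef, hCdef, ← integral_const_mul]
    apply integral_mono (hK1'.const_mul θ) hK2'
    intro p
    simp only [hg1, hg2]
    have hd : (0:ℝ) ≤ (dist p.1 p.2 ^ μ)⁻¹ := inv_nonneg.mpr (Real.rpow_nonneg dist_nonneg μ)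
    have hnum : F (u p.2, v p.2) * (θ * F (u p.1, v p.1)) ≤
        F (u p.2, v p.2) * fderiv ℝ F (u p.1, v p.1) (u p.1, v p.1) :=
      mul_le_mul_of_nonneg_left (hAR' _) (hFnn _)
    have := mul_le_mul_of_nonneg_right hnum hd
    calc θ * (F (u p.2, v p.2) * F (u p.1, v p.1) / dist p.1 p.2 ^ μ)
        = F (u p.2, v p.2) * (θ * F (u p.1, v p.1)) * (dist p.1 p.2 ^ μ)⁻¹ := by
          rw [div_eq_mul_inv]; ring
      _ ≤ F (u p.2, v p.2) * fderiv ℝ F (u p.1, v p.1) (u p.1, v p.1) *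
          (dist p.1 p.2 ^ μ)⁻¹ := this
      _ = F (u p.2, v p.2) * fderiv ℝ F (u p.1, v p.1) (u p.1, v p.1) / dist p.1 p.2 ^ μ := by
          rw [div_eq_mul_inv]
  rw [hBeq]
  refine ⟨by linarith, ?_, ?_⟩
  · rw [hA]; nlinarith [hθB, hBnn]
  · rw [hA]; nlinarith [hθB, hBnn, mul_nonneg (by linarith : (0:ℝ) ≤ (4 * θ + μ - 12) / 8) hBnn]

end
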